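/- For positive integers r ≤ s < n and nonnegative integer u, and any i with 0 ≤ i ≤ s−r, the following polynomial identity in t holds: ∑_{ℓ=0}^{s−1} C(t(s−r−i)+s−1−i, s−1−ℓ) · C(u, ℓ) / (n−s+ℓ) = (1/(n−1)!) ∑_{ℓ=0}^{s−1} (n−2−ℓ)! · ℓ! · C(t(s−r−i)+u+s−1−ℓ−i, s−1−ℓ) · C(t(s−r−i)+s−1−i, ℓ). -/

import Mathlib

/-!
For fixed `x`, `u`, `d` consider the polynomial `∑ ℓ, C(x, d-ℓ) C(u, ℓ) X^ℓ`, the coefficient of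
`Y^d` in `(1 + Y)^x (1 + XY)^u`. Writing `1 + Y = (1 + XY) + (1 - X) Y` expands it instead as
`∑ ℓ, C(x + u - ℓ, d - ℓ) C(x, ℓ) (1 - X)^ℓ X^(d-ℓ)`. Applying `p ↦ ∫₀¹ y^c p(y) dy` to both
expressions gives the identity for every `x`: on the first one it produces the denominators
`c + ℓ + 1`, on the second the Beta integrals `∫₀¹ y^(c+e) (1-y)^l dy = l! (c+e)! / (c+e+l+1)!`.
The theorem is the case `x = t(s-r-i) + s-1-i`, `d = s - 1`, `c = n - s - 1`.
-/

/-- The generalized binomial coefficient `C(x, k) = x(x−1)⋯(x−k+1)/k!`. -/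
def qchoose (x : ℚ) (k : ℕ) : ℚ :=
  (∏ j ∈ Finset.range k, (x - j)) / (Nat.factorial k : ℚ)

open Finset Polynomial

section BinomialRing

variable {R : Type*} [CommRing R] [BinomialRing R]

noncomputable def choosePoly (x : R) (u d : ℕ) : R[X] :=
  ∑ ℓ ∈ range (d + 1), C (Ring.choose x (d - ℓ) * u.choose ℓ) * X ^ ℓ

noncomputable def bernsteinChoosePoly (x : R) (u d : ℕ) : R[X] :=
  ∑ ℓ ∈ range (d + 1),
    C (Ring.choose (x + u - ℓ) (d - ℓ) * Ring.choose x ℓ) * (1 - X) ^ ℓ * X ^ (d - ℓ)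

theorem choosePoly_zero_left (x : R) (d : ℕ) : choosePoly x 0 d = C (Ring.choose x d) := by
  simp [choosePoly, sum_range_succ']

theorem choosePoly_zero_right (x : R) (u : ℕ) : choosePoly x u 0 = 1 := by
  simp [choosePoly]

theorem choosePoly_succ_succ (x : R) (u d : ℕ) :
    choosePoly x (u + 1) (d + 1) = choosePoly x u (d + 1) + X * choosePoly x u d := by
  have hterm : ∀ ℓ ∈ range (d + 1),
      C (Ring.choose x (d + 1 - (ℓ + 1)) * (u + 1).choose (ℓ + 1)) * X ^ (ℓ + 1) =
        C (Ring.choose x (d + 1 - (ℓ + 1)) * u.choose (ℓ + 1)) * X ^ (ℓ + 1) +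
          X * (C (Ring.choose x (d - ℓ) * u.choose ℓ) * X ^ ℓ) := by
    intro ℓ _
    rw [Nat.choose_succ_succ', Nat.add_sub_add_right]
    simp only [Nat.cast_add, mul_add, map_add]
    ring
  unfold choosePoly
  rw [sum_range_succ', sum_congr rfl hterm, sum_add_distrib, ← mul_sum,
    sum_range_succ' (n := d + 1), Nat.choose_zero_right, Nat.choose_zero_right]
  ring

theorem bernsteinChoosePoly_zero_left (x : R) (d : ℕ) :
    bernsteinChoosePoly x 0 d = C (Ring.choose x d) := by
  have hterm : ∀ ℓ ∈ range (d + 1),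
      C (Ring.choose (x + (0 : ℕ) - ℓ) (d - ℓ) * Ring.choose x ℓ) * (1 - X) ^ ℓ * X ^ (d - ℓ) =
        C (Ring.choose x d) * ((1 - X) ^ ℓ * X ^ (d - ℓ) * (d.choose ℓ : R[X])) := by
    intro ℓ hℓ
    rw [Nat.cast_zero, add_zero, mul_comm (Ring.choose (x - ℓ) _),
      ← Ring.choose_smul_choose x (Nat.le_of_lt_succ (mem_range.mp hℓ)), nsmul_eq_mul]
    simp only [map_mul, map_natCast]
    ring
  rw [bernsteinChoosePoly, sum_congr rfl hterm, ← mul_sum, ← add_pow, sub_add_cancel, one_pow,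
    mul_one]

theorem bernsteinChoosePoly_zero_right (x : R) (u : ℕ) : bernsteinChoosePoly x u 0 = 1 := by
  simp [bernsteinChoosePoly]

theorem bernsteinChoosePoly_succ_succ (x : R) (u d : ℕ) :
    bernsteinChoosePoly x (u + 1) (d + 1) =
      bernsteinChoosePoly x u (d + 1) + X * bernsteinChoosePoly x u d := by
  have hterm : ∀ ℓ ∈ range (d + 1),
      C (Ring.choose (x + (u + 1 : ℕ) - ℓ) (d + 1 - ℓ) * Ring.choose x ℓ) * (1 - X) ^ ℓ *
          X ^ (d + 1 - ℓ) =
        C (Ring.choose (x + u - ℓ) (d + 1 - ℓ) * Ring.choose x ℓ) * (1 - X) ^ ℓ *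
            X ^ (d + 1 - ℓ) +
          X * (C (Ring.choose (x + u - ℓ) (d - ℓ) * Ring.choose x ℓ) * (1 - X) ^ ℓ *
            X ^ (d - ℓ)) := by
    intro ℓ hℓ
    obtain ⟨k, hk⟩ : ∃ k, d + 1 - ℓ = k + 1 ∧ d - ℓ = k := ⟨d - ℓ, by have := mem_range.mp hℓ; omega⟩
    rw [hk.1, hk.2, show x + (u + 1 : ℕ) - ℓ = x + u - ℓ + 1 by push_cast; ring,
      Ring.choose_succ_succ]
    simp only [map_mul, map_add]
    ring
  unfold bernsteinChoosePoly
  rw [sum_range_succ, sum_congr rfl hterm, sum_add_distrib, ← mul_sum,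
    sum_range_succ (n := d + 1), Nat.sub_self, Ring.choose_zero_right, Ring.choose_zero_right]
  ring

theorem choosePoly_eq_bernsteinChoosePoly (x : R) (u d : ℕ) :
    choosePoly x u d = bernsteinChoosePoly x u d := by
  induction u generalizing d with
  | zero => rw [choosePoly_zero_left, bernsteinChoosePoly_zero_left]
  | succ u ih =>
    cases d with
    | zero => rw [choosePoly_zero_right, bernsteinChoosePoly_zero_right]
    | succ d => rw [choosePoly_succ_succ, bernsteinChoosePoly_succ_succ, ih, ih]

end BinomialRing

section Moments

variable {K : Type*} [Field K]

/-- The functional `p ↦ ∫₀¹ y^c p(y) dy`, defined on coefficients. -/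
noncomputable def momentFunctional (c : ℕ) : K[X] →ₗ[K] K :=
  lsum fun k => ((c + k + 1 : K)⁻¹) • LinearMap.id

theorem momentFunctional_C_mul_X_pow (c k : ℕ) (a : K) :
    momentFunctional c (C a * X ^ k) = a / (c + k + 1) := by
  rw [momentFunctional, lsum_apply, C_mul_X_pow_eq_monomial, sum_monomial_index _ _ (by simp)]
  simp [div_eq_inv_mul]

theorem momentFunctional_one_sub_X_pow_mul_X_pow [CharZero K] (c l e : ℕ) :
    momentFunctional c ((1 - X) ^ l * X ^ e : K[X]) =
      l.factorial * (c + e).factorial / (c + e + l + 1).factorial := by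
  have hfact : ∀ m : ℕ, (m.factorial : K) ≠ 0 := fun m => Nat.cast_ne_zero.mpr m.factorial_ne_zero
  induction l generalizing e with
  | zero =>
    have h := momentFunctional_C_mul_X_pow c e (1 : K)
    rw [C_1, one_mul] at h
    rw [pow_zero, one_mul, h, Nat.factorial_zero, Nat.factorial_succ]
    push_cast
    field_simp [hfact]
  | succ l ih =>
    have hsplit : ((1 - X) ^ (l + 1) * X ^ e : K[X]) =
        (1 - X) ^ l * X ^ e - (1 - X) ^ l * X ^ (e + 1) := by ring
    rw [hsplit, map_sub, ih, ih, show c + (e + 1) + l + 1 = c + e + l + 1 + 1 by omega,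
      show c + e + (l + 1) + 1 = c + e + l + 1 + 1 by omega, ← add_assoc,
      Nat.factorial_succ (c + e + l + 1), Nat.factorial_succ (c + e), Nat.factorial_succ l]
    have hN : ((c + e + l + 1 + 1 : ℕ) : K) ≠ 0 := Nat.cast_ne_zero.mpr (Nat.succ_ne_zero _)
    push_cast at hN ⊢
    field_simp [hfact]
    ring

end Moments

theorem sum_choose_mul_choose_div_eq {K : Type*} [Field K] [CharZero K] (x : K) (u d c : ℕ) :
    ∑ ℓ ∈ range (d + 1), Ring.choose x (d - ℓ) * u.choose ℓ / (c + ℓ + 1) =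
      (∑ ℓ ∈ range (d + 1), ((c + (d - ℓ)).factorial : K) * ℓ.factorial *
        Ring.choose (x + u - ℓ) (d - ℓ) * Ring.choose x ℓ) / (c + d + 1).factorial := by
  have h := congrArg (momentFunctional c) (choosePoly_eq_bernsteinChoosePoly x u d)
  rw [choosePoly, bernsteinChoosePoly, map_sum, map_sum] at h
  rw [sum_div]
  convert h using 1
  · exact sum_congr rfl fun ℓ _ => (momentFunctional_C_mul_X_pow c ℓ _).symm
  · refine sum_congr rfl fun ℓ hℓ => ?_
    rw [mul_assoc (C _), C_mul', map_smul, smul_eq_mul, momentFunctional_one_sub_X_pow_mul_X_pow,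
      show c + (d - ℓ) + ℓ + 1 = c + d + 1 by have := mem_range.mp hℓ; omega]
    ring

theorem qchoose_eq_choose (x : ℚ) (k : ℕ) : qchoose x k = Ring.choose x k := by
  rw [qchoose, Ring.choose_eq_smul, ← aeval_eq_smeval, aeval_def, eval₂_eq_eval_map,
    descPochhammer_map, descPochhammer_eval_eq_prod_range, smul_eq_mul, div_eq_inv_mul]

theorem stmt_18_general (r s n u i : ℕ) (hsn : s < n) (t : ℚ) :
    (∑ ℓ ∈ Finset.range s,
        qchoose (t * ((s : ℚ) - r - i) + s - 1 - i) (s - 1 - ℓ) * (u.choose ℓ : ℚ) /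
          ((n : ℚ) - s + ℓ))
      = (1 / (Nat.factorial (n - 1) : ℚ)) *
          ∑ ℓ ∈ Finset.range s,
            (Nat.factorial (n - 2 - ℓ) : ℚ) * (Nat.factorial ℓ : ℚ) *
              qchoose (t * ((s : ℚ) - r - i) + u + s - 1 - ℓ - i) (s - 1 - ℓ) *
              qchoose (t * ((s : ℚ) - r - i) + s - 1 - i) ℓ := by
  rcases s with _ | d
  · simp
  obtain ⟨c, rfl⟩ : ∃ c, n = d + 1 + c + 1 := ⟨n - d - 2, by omega⟩
  set x : ℚ := t * ((d + 1 : ℕ) - r - i) + (d + 1 : ℕ) - 1 - i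
  rw [one_div_mul_eq_div, show d + 1 + c + 1 - 1 = c + d + 1 by omega]
  convert sum_choose_mul_choose_div_eq x u d c using 2
  · rw [qchoose_eq_choose, Nat.add_sub_cancel]
    push_cast
    ring
  · refine sum_congr rfl fun ℓ hℓ => ?_
    rw [qchoose_eq_choose, qchoose_eq_choose, Nat.add_sub_cancel,
      show d + 1 + c + 1 - 2 - ℓ = c + (d - ℓ) by have := mem_range.mp hℓ; omega,
      show t * ((d + 1 : ℕ) - r - i) + u + (d + 1 : ℕ) - 1 - ℓ - i = x + u - ℓ by ring]

/-- For positive integers `r ≤ s < n`, a nonnegative integer `u`, and any `0 ≤ i ≤ s−r`,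
the following polynomial identity in `t` holds (stated for all rational `t`):
`∑_{ℓ=0}^{s−1} C(t(s−r−i)+s−1−i, s−1−ℓ) C(u, ℓ) / (n−s+ℓ)`
`= (1/(n−1)!) ∑_{ℓ=0}^{s−1} (n−2−ℓ)! ℓ! C(t(s−r−i)+u+s−1−ℓ−i, s−1−ℓ)
C(t(s−r−i)+s−1−i, ℓ)`. -/
theorem stmt_18 (r s n u i : ℕ) (hr : 1 ≤ r) (hrs : r ≤ s) (hsn : s < n)
    (hi : i ≤ s - r) (t : ℚ) :
    (∑ ℓ ∈ Finset.range s,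
        qchoose (t * ((s : ℚ) - r - i) + s - 1 - i) (s - 1 - ℓ) * (u.choose ℓ : ℚ) /
          ((n : ℚ) - s + ℓ))
      = (1 / (Nat.factorial (n - 1) : ℚ)) *
          ∑ ℓ ∈ Finset.range s,
            (Nat.factorial (n - 2 - ℓ) : ℚ) * (Nat.factorial ℓ : ℚ) *
              qchoose (t * ((s : ℚ) - r - i) + u + s - 1 - ℓ - i) (s - 1 - ℓ) *
              qchoose (t * ((s : ℚ) - r - i) + s - 1 - i) ℓ :=
  stmt_18_general r s n u i hsn t
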